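/- Let L⁰ (with K₀ ≥ 1 steps) and L¹ (with K₁ ≥ 1 steps) be two load profiles over the same G ≥ 1 workers, each satisfying the load-profile setup with the same constants κ, P_idle, P_max, γ, and suppose additionally P_max > 0, W := W(L⁰) = W(L¹) > 0 and ImbTot(L⁰) > 0. Let α ≥ 1 satisfy ImbTot(L¹) ≤ ImbTot(L⁰)/α and P_idle (1 − 1/α) − D_γ/α ≥ 0. Then, with η = ImbTot(L⁰)/W, the energy saving fraction satisfies (E(L⁰) − E(L¹)) / E(L⁰) ≥ ( P_idle (1 − 1/α) − D_γ/α ) / ( P_max/η + C_γ ), where C_γ = (1−γ)P_max + γ P_idle and D_γ = (1−γ)(P_max − P_idle). -/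
import Mathlib


open Finset

/-- Per-step maximum load `L*(k) = max_g L(k,g)`. -/
noncomputable def Lstar (K G : ℕ) [NeZero G] (L : Fin K → Fin G → ℝ) (k : Fin K) : ℝ :=
  Finset.univ.sup' ⟨0, Finset.mem_univ 0⟩ (L k)

/-- Utilization `u_g(k) = L(k,g) / L*(k)`. -/
noncomputable def uLoad (K G : ℕ) [NeZero G] (L : Fin K → Fin G → ℝ)
    (k : Fin K) (g : Fin G) : ℝ :=
  L k g / Lstar K G L k

/-- Total energy
`E(L) = κ ∑_k L*(k) ∑_g (P_idle + (P_max − P_idle) u_g(k)^γ)` (real power `rpow`). -/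
noncomputable def energy (K G : ℕ) [NeZero G] (κ Pidle Pmax γ : ℝ)
    (L : Fin K → Fin G → ℝ) : ℝ :=
  κ * ∑ k : Fin K, Lstar K G L k *
      ∑ g : Fin G, (Pidle + (Pmax - Pidle) * (uLoad K G L k g) ^ γ)

/-- Total workload `W(L) = ∑_k ∑_g L(k,g)`. -/
noncomputable def workTot (K G : ℕ) (L : Fin K → Fin G → ℝ) : ℝ :=
  ∑ k : Fin K, ∑ g : Fin G, L k g

/-- Total imbalance `ImbTot(L) = ∑_k ∑_g (L*(k) − L(k,g))`. -/
noncomputable def imbTot (K G : ℕ) [NeZero G] (L : Fin K → Fin G → ℝ) : ℝ :=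
  ∑ k : Fin K, ∑ g : Fin G, (Lstar K G L k - L k g)



lemma aux_le_rpow {u γ : ℝ} (hu0 : 0 ≤ u) (hu1 : u ≤ 1) (hγ0 : 0 < γ) (hγ1 : γ ≤ 1) :
    u ≤ u ^ γ := by
  rcases eq_or_lt_of_le hu0 with h | h
  · simp [← h, Real.zero_rpow hγ0.ne']
  · calc u = u ^ (1 : ℝ) := (Real.rpow_one u).symm
      _ ≤ u ^ γ := Real.rpow_le_rpow_of_exponent_ge h hu1 hγ1

lemma aux_rpow_le {u γ : ℝ} (hu0 : 0 ≤ u) (hγ0 : 0 ≤ γ) (hγ1 : γ ≤ 1) :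
    u ^ γ ≤ γ * u + (1 - γ) := by
  have := Real.geom_mean_le_arith_mean2_weighted hγ0 (by linarith : (0:ℝ) ≤ 1 - γ)
    hu0 zero_le_one (by ring)
  simpa using this


lemma energy_eq (K G : ℕ) [NeZero G] (L : Fin K → Fin G → ℝ) (κ Pidle Pmax γ : ℝ) :
    energy K G κ Pidle Pmax γ L =
      κ * ∑ k : Fin K, ∑ g : Fin G,
        Lstar K G L k * (Pidle + (Pmax - Pidle) * (uLoad K G L k g) ^ γ) := by
  unfold energy
  congr 1
  exact Finset.sum_congr rfl fun k _ => Finset.mul_sum _ _ _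

lemma energy_lower (K G : ℕ) [NeZero G] (L : Fin K → Fin G → ℝ) (hL : ∀ k g, 0 ≤ L k g) (hLs : ∀ k, 0 < Lstar K G L k)
    (κ Pidle Pmax γ : ℝ) (hκ : 0 ≤ κ) (hPi : 0 ≤ Pidle) (hPm : Pidle ≤ Pmax)
    (hγ : γ ∈ Set.Ioo (0 : ℝ) 1) :
    κ * (Pmax * workTot K G L + Pidle * imbTot K G L) ≤ energy K G κ Pidle Pmax γ L := by
  rw [energy_eq]
  have e1 : Pmax * workTot K G L + Pidle * imbTot K G L =
      ∑ k : Fin K, ∑ g : Fin G, (Pmax * L k g + Pidle * (Lstar K G L k - L k g)) := by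
    unfold workTot imbTot
    rw [Finset.mul_sum, Finset.mul_sum, ← Finset.sum_add_distrib]
    refine Finset.sum_congr rfl fun k _ => ?_
    rw [Finset.mul_sum, Finset.mul_sum, ← Finset.sum_add_distrib]
  rw [e1]
  refine mul_le_mul_of_nonneg_left ?_ hκ
  refine Finset.sum_le_sum fun k _ => Finset.sum_le_sum fun g _ => ?_
  have hs := hLs k
  have hx := hL k g
  have hxs : L k g ≤ Lstar K G L k := Finset.le_sup' (L k) (Finset.mem_univ g)
  have hu0 : 0 ≤ uLoad K G L k g := div_nonneg hx hs.le
  have hu1 : uLoad K G L k g ≤ 1 := (div_le_one hs).mpr hxs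
  have h1 : uLoad K G L k g ≤ (uLoad K G L k g) ^ γ := aux_le_rpow hu0 hu1 hγ.1 hγ.2.le
  have key : Pmax * L k g + Pidle * (Lstar K G L k - L k g) =
      Lstar K G L k * (Pidle + (Pmax - Pidle) * uLoad K G L k g) := by
    unfold uLoad; field_simp; ring
  rw [key]
  gcongr

lemma energy_upper (K G : ℕ) [NeZero G] (L : Fin K → Fin G → ℝ) (hL : ∀ k g, 0 ≤ L k g) (hLs : ∀ k, 0 < Lstar K G L k)
    (κ Pidle Pmax γ : ℝ) (hκ : 0 ≤ κ) (hPi : 0 ≤ Pidle) (hPm : Pidle ≤ Pmax)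
    (hγ : γ ∈ Set.Ioo (0 : ℝ) 1) :
    energy K G κ Pidle Pmax γ L ≤
      κ * (Pmax * workTot K G L + ((1 - γ) * Pmax + γ * Pidle) * imbTot K G L) := by
  rw [energy_eq]
  have e1 : Pmax * workTot K G L + ((1 - γ) * Pmax + γ * Pidle) * imbTot K G L =
      ∑ k : Fin K, ∑ g : Fin G,
        (Pmax * L k g + ((1 - γ) * Pmax + γ * Pidle) * (Lstar K G L k - L k g)) := by
    unfold workTot imbTot
    rw [Finset.mul_sum, Finset.mul_sum, ← Finset.sum_add_distrib]
    refine Finset.sum_congr rfl fun k _ => ?_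
    rw [Finset.mul_sum, Finset.mul_sum, ← Finset.sum_add_distrib]
  rw [e1]
  refine mul_le_mul_of_nonneg_left ?_ hκ
  refine Finset.sum_le_sum fun k _ => Finset.sum_le_sum fun g _ => ?_
  have hs := hLs k
  have hx := hL k g
  have hu0 : 0 ≤ uLoad K G L k g := div_nonneg hx hs.le
  have h2 : (uLoad K G L k g) ^ γ ≤ γ * uLoad K G L k g + (1 - γ) :=
    aux_rpow_le hu0 hγ.1.le hγ.2.le
  have key : Lstar K G L k * (Pidle + (Pmax - Pidle) * (γ * uLoad K G L k g + (1 - γ))) =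
      Pmax * L k g + ((1 - γ) * Pmax + γ * Pidle) * (Lstar K G L k - L k g) := by
    unfold uLoad; field_simp; ring
  calc Lstar K G L k * (Pidle + (Pmax - Pidle) * (uLoad K G L k g) ^ γ)
      ≤ Lstar K G L k * (Pidle + (Pmax - Pidle) * (γ * uLoad K G L k g + (1 - γ))) := by
        gcongr
    _ = _ := key


/-- Energy-saving fraction guarantee: with `η = ImbTot(L⁰)/W`, if
`ImbTot(L¹) ≤ ImbTot(L⁰)/α` with `α ≥ 1` and `P_idle (1 − 1/α) − D_γ/α ≥ 0`, then
`(E(L⁰) − E(L¹)) / E(L⁰) ≥ (P_idle (1 − 1/α) − D_γ/α) / (P_max/η + C_γ)`. -/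
theorem energy_saving_fraction (K₀ K₁ G : ℕ)
    [NeZero K₀] [NeZero K₁] [NeZero G]
    (L₀ : Fin K₀ → Fin G → ℝ) (L₁ : Fin K₁ → Fin G → ℝ)
    (hL₀ : ∀ k g, 0 ≤ L₀ k g) (hL₁ : ∀ k g, 0 ≤ L₁ k g)
    (hLstar₀ : ∀ k, 0 < Lstar K₀ G L₀ k) (hLstar₁ : ∀ k, 0 < Lstar K₁ G L₁ k)
    (κ Pidle Pmax γ : ℝ) (hκ : 0 < κ) (hPi : 0 ≤ Pidle) (hPm : Pidle ≤ Pmax)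
    (hγ : γ ∈ Set.Ioo (0 : ℝ) 1)
    (hPmax : 0 < Pmax)
    (hW : workTot K₀ G L₀ = workTot K₁ G L₁)
    (hWpos : 0 < workTot K₀ G L₀)
    (hImb0 : 0 < imbTot K₀ G L₀)
    (α : ℝ) (hα : 1 ≤ α)
    (hImb : imbTot K₁ G L₁ ≤ imbTot K₀ G L₀ / α)
    (hnum : 0 ≤ Pidle * (1 - 1 / α) - (1 - γ) * (Pmax - Pidle) / α) :
    (Pidle * (1 - 1 / α) - (1 - γ) * (Pmax - Pidle) / α) /
        (Pmax / (imbTot K₀ G L₀ / workTot K₀ G L₀) + ((1 - γ) * Pmax + γ * Pidle)) ≤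
      (energy K₀ G κ Pidle Pmax γ L₀ - energy K₁ G κ Pidle Pmax γ L₁) /
        energy K₀ G κ Pidle Pmax γ L₀ := by

  classical
  set W := workTot K₀ G L₀ with hWdef
  set I0 := imbTot K₀ G L₀ with hI0def
  set I1 := imbTot K₁ G L₁ with hI1def
  set E0 := energy K₀ G κ Pidle Pmax γ L₀ with hE0def
  set E1 := energy K₁ G κ Pidle Pmax γ L₁ with hE1def
  set Cg := (1 - γ) * Pmax + γ * Pidle with hCgdef
  have hγ0 := hγ.1
  have hγ1 := hγ.2
  have hαpos : (0:ℝ) < α := lt_of_lt_of_le one_pos hα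
  have hCγ : 0 ≤ Cg := by
    have h1 : (0:ℝ) ≤ (1 - γ) * Pmax := mul_nonneg (by linarith) hPmax.le
    have h2 : (0:ℝ) ≤ γ * Pidle := mul_nonneg hγ0.le hPi
    rw [hCgdef]; linarith
  have hE0low : κ * (Pmax * W + Pidle * I0) ≤ E0 :=
    energy_lower K₀ G L₀ hL₀ hLstar₀ κ Pidle Pmax γ hκ.le hPi hPm hγ
  have hE0up : E0 ≤ κ * (Pmax * W + Cg * I0) :=
    energy_upper K₀ G L₀ hL₀ hLstar₀ κ Pidle Pmax γ hκ.le hPi hPm hγ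
  have hE1up : E1 ≤ κ * (Pmax * W + Cg * I1) := by
    have h := energy_upper K₁ G L₁ hL₁ hLstar₁ κ Pidle Pmax γ hκ.le hPi hPm hγ
    rw [hW, hI1def]; exact h
  have hE0pos : 0 < E0 := by
    have h0 : 0 < κ * (Pmax * W + Pidle * I0) := by
      apply mul_pos hκ
      have : 0 < Pmax * W := mul_pos hPmax hWpos
      have : 0 ≤ Pidle * I0 := mul_nonneg hPi hImb0.le
      linarith
    linarith
  set N := Pidle * (1 - 1 / α) - (1 - γ) * (Pmax - Pidle) / α with hNdef
  set D := Pmax / (I0 / W) + Cg with hDdef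
  clear_value W I0 I1 E0 E1 Cg N D
  have hI0ne : I0 ≠ 0 := hImb0.ne'
  have hWne : W ≠ 0 := hWpos.ne'
  have hαne : α ≠ 0 := hαpos.ne'
  have hNval : N = Pidle - Cg / α := by
    rw [hNdef, hCgdef]; field_simp; ring
  have hDpos : 0 < D := by
    have h1 : 0 < Pmax / (I0 / W) := div_pos hPmax (div_pos hImb0 hWpos)
    rw [hDdef]; linarith
  have hID : κ * I0 * D = κ * (Pmax * W + Cg * I0) := by
    rw [hDdef]; field_simp
  have hImb' : κ * (Cg * I1) ≤ κ * (Cg * (I0 / α)) :=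
    mul_le_mul_of_nonneg_left (mul_le_mul_of_nonneg_left hImb hCγ) hκ.le
  have hNI : κ * I0 * N = κ * (Pidle * I0) - κ * (Cg * (I0 / α)) := by
    rw [hNval]; field_simp
  have hdiff : κ * I0 * N ≤ E0 - E1 := by
    rw [hNI]; nlinarith [hE0low, hE1up, hImb']
  rw [div_le_div_iff₀ hDpos hE0pos]
  have hE0D : E0 ≤ κ * I0 * D := by rw [hID]; exact hE0up
  nlinarith [mul_le_mul_of_nonneg_left hE0D hnum, mul_le_mul_of_nonneg_right hdiff hDpos.le]
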